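/- Suppose Y and C are independent, and that the indicator δ = 1{Y ≤ C} is conditionally independent of the covariate vector X given the σ-algebra generated by Y. Then for every x ∈ ℝ^k and every y ∈ ℝ with ℙ(Q ≥ y) > 0, the joint cumulative hazard is identified from observables: ∫_{(-∞,y]} (ℙ(Q ≥ s))⁻¹ dν_{1,x}(s) = ∫_{(-∞,y]} (ℙ(Y ≥ s))⁻¹ dμ_{Y,x}(s), where ν_{1,x} is the sub-distribution measure A ↦ ℙ(Q ∈ A, X ≤ x, Y ≤ C) and μ_{Y,x} is the sub-distribution measure A ↦ ℙ(Y ∈ A, X ≤ x) (with X ≤ x meant componentwise). (This is the identity Λ(y,x) = Λ^cens(y,x) of Proposition 1 within one treatment arm.) -/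

import Mathlib

/-
On `{Y ≤ C}` the observed outcome `min Y C` equals `Y`, so `ν_{1,x}` is the law of `Y` on
`{X ≤ x, Y ≤ C}`. Independence of `Y` and `C` gives `ℙ(Y ≤ C | Y) = G(Y)` with
`G(s) = ℙ(C ≥ s)`, and the conditional independence of `δ` and `X` given `Y` then shows that
`ν_{1,x}` has density `G` with respect to `μ_{Y,x}`. Independence also factors
`ℙ(Q ≥ s) = ℙ(Y ≥ s) G(s)`, so the integrands `G(s) / ℙ(Q ≥ s)` and `1 / ℙ(Y ≥ s)` agree
on `(-∞, y]`, where `G(s) ≥ ℙ(Q ≥ y) > 0`.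
-/

open MeasureTheory ProbabilityTheory Set

theorem measureReal_inter_inter_eq_setIntegral_condExp {Ω : Type*} {m mΩ : MeasurableSpace Ω}
    (hm : m ≤ mΩ) {μ : Measure Ω} [IsFiniteMeasure μ] {D B S : Set Ω}
    (hD : MeasurableSet D) (hB : MeasurableSet B) (hS : MeasurableSet[m] S)
    (hDB : (μ⟦D ∩ B | m⟧) =ᵐ[μ] (μ⟦D | m⟧) * (μ⟦B | m⟧)) :
    μ.real (S ∩ (D ∩ B)) = ∫ ω in S ∩ B, (μ⟦D | m⟧) ω ∂μ := by
  have hmul : (μ⟦D | m⟧) * B.indicator (fun _ => 1) = B.indicator (μ⟦D | m⟧) := by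
    ext ω; by_cases hω : ω ∈ B <;> simp [hω]
  have hint : Integrable ((μ⟦D | m⟧) * B.indicator (fun _ => 1)) μ :=
    hmul ▸ integrable_condExp.indicator hB
  have hpull : μ[(μ⟦D | m⟧) * B.indicator (fun _ => 1) | m] =ᵐ[μ] (μ⟦D | m⟧) * (μ⟦B | m⟧) :=
    condExp_mul_of_stronglyMeasurable_left stronglyMeasurable_condExp hint
      ((integrable_const 1).indicator hB)
  calc μ.real (S ∩ (D ∩ B))
      = ∫ ω in S, (D ∩ B).indicator (fun _ => (1 : ℝ)) ω ∂μ := by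
        rw [setIntegral_indicator (hD.inter hB)]; simp [Measure.real]
    _ = ∫ ω in S, (μ⟦D ∩ B | m⟧) ω ∂μ :=
        (setIntegral_condExp hm ((integrable_const 1).indicator (hD.inter hB)) hS).symm
    _ = ∫ ω in S, μ[(μ⟦D | m⟧) * B.indicator (fun _ => 1) | m] ω ∂μ :=
        setIntegral_congr_ae (hm S hS) ((hDB.trans hpull.symm).mono fun _ h _ => h)
    _ = ∫ ω in S, B.indicator (μ⟦D | m⟧) ω ∂μ := by
        rw [setIntegral_condExp hm hint hS, hmul]
    _ = ∫ ω in S ∩ B, (μ⟦D | m⟧) ω ∂μ := setIntegral_indicator hB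

section Independent

variable {Ω : Type*} [MeasurableSpace Ω] {P : Measure Ω} {Y C : Ω → ℝ}

theorem measurable_measure_setOf_le (P : Measure Ω) (Z : Ω → ℝ) :
    Measurable fun s => P {ω | s ≤ Z ω} :=
  Antitone.measurable fun _ _ hab => measure_mono fun _ hω => hab.trans hω

theorem ProbabilityTheory.IndepFun.measure_le_min_eq_mul (hindep : IndepFun Y C P) (s : ℝ) :
    P {ω | s ≤ min (Y ω) (C ω)} = P {ω | s ≤ Y ω} * P {ω | s ≤ C ω} := by
  rw [show {ω | s ≤ min (Y ω) (C ω)} = Y ⁻¹' Ici s ∩ C ⁻¹' Ici s by ext; simp]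
  exact hindep.measure_inter_preimage_eq_mul _ _ measurableSet_Ici measurableSet_Ici

variable [IsProbabilityMeasure P]

theorem ProbabilityTheory.IndepFun.measure_preimage_inter_setOf_le (hY : Measurable Y)
    (hC : Measurable C) (hindep : IndepFun Y C P) {A : Set ℝ} (hA : MeasurableSet A) :
    P (Y ⁻¹' A ∩ {ω | Y ω ≤ C ω}) = ∫⁻ s in A, P {ω | s ≤ C ω} ∂(P.map Y) := by
  have hE : MeasurableSet {p : ℝ × ℝ | p.1 ∈ A ∧ p.1 ≤ p.2} :=
    (measurable_fst hA).inter (measurableSet_le measurable_fst measurable_snd)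
  change P ((fun ω => (Y ω, C ω)) ⁻¹' {p : ℝ × ℝ | p.1 ∈ A ∧ p.1 ≤ p.2}) = _
  rw [← Measure.map_apply (hY.prodMk hC) hE,
    (indepFun_iff_map_prod_eq_prod_map_map hY.aemeasurable hC.aemeasurable).mp hindep,
    Measure.prod_apply hE, ← lintegral_indicator hA]
  refine lintegral_congr fun s => ?_
  by_cases hs : s ∈ A
  · rw [indicator_of_mem hs, show Prod.mk s ⁻¹' _ = Ici s by ext; simp [hs]]
    exact Measure.map_apply hC measurableSet_Ici
  · simp [hs]

theorem ProbabilityTheory.IndepFun.condExp_setOf_le_ae_eq (hY : Measurable Y)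
    (hC : Measurable C) (hindep : IndepFun Y C P) :
    (fun ω => P.real {ω' | Y ω ≤ C ω'})
      =ᵐ[P] P⟦{ω | Y ω ≤ C ω} | MeasurableSpace.comap Y inferInstance⟧ := by
  have hG : Measurable fun s => P.real {ω | s ≤ C ω} :=
    (measurable_measure_setOf_le P C).ennreal_toReal
  refine ae_eq_condExp_of_forall_setIntegral_eq hY.comap_le
    ((integrable_const 1).indicator (measurableSet_le hY hC)) (fun _ _ _ => ?_) ?_
    (hG.comp (comap_measurable Y)).aestronglyMeasurable
  · exact (Integrable.of_bound (hG.comp hY).aestronglyMeasurable 1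
      (ae_of_all _ fun _ => by simp [abs_of_nonneg])).integrableOn
  · rintro _ ⟨A, hA, rfl⟩ -
    rw [setIntegral_indicator (measurableSet_le hY hC), setIntegral_const, smul_eq_mul, mul_one,
      ← setIntegral_map hA hG.aestronglyMeasurable hY.aemeasurable]
    simp only [measureReal_def]
    rw [integral_toReal (measurable_measure_setOf_le P C).aemeasurable
        (ae_of_all _ fun _ => measure_lt_top P _),
      ← hindep.measure_preimage_inter_setOf_le hY hC hA]

theorem ProbabilityTheory.IndepFun.map_restrict_inter_setOf_le_eq_withDensity
    (hY : Measurable Y) (hC : Measurable C) (hindep : IndepFun Y C P)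
    {B : Set Ω} (hB : MeasurableSet B)
    (hci : (P⟦{ω | Y ω ≤ C ω} ∩ B | MeasurableSpace.comap Y inferInstance⟧) =ᵐ[P]
      (P⟦{ω | Y ω ≤ C ω} | MeasurableSpace.comap Y inferInstance⟧) *
        (P⟦B | MeasurableSpace.comap Y inferInstance⟧)) :
    (P.restrict (B ∩ {ω | Y ω ≤ C ω})).map Y =
      ((P.restrict B).map Y).withDensity fun s => P {ω | s ≤ C ω} := by
  have hcond := hindep.condExp_setOf_le_ae_eq hY hC
  ext A hA
  rw [Measure.map_apply hY hA, Measure.restrict_apply (hY hA), withDensity_apply _ hA,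
    setLIntegral_map hA (measurable_measure_setOf_le P C) hY,
    Measure.restrict_restrict (hY hA), inter_comm B]
  calc P (Y ⁻¹' A ∩ ({ω | Y ω ≤ C ω} ∩ B))
      = ENNReal.ofReal (∫ ω in Y ⁻¹' A ∩ B,
          (P⟦{ω | Y ω ≤ C ω} | MeasurableSpace.comap Y inferInstance⟧) ω ∂P) := by
        rw [← measureReal_inter_inter_eq_setIntegral_condExp hY.comap_le (measurableSet_le hY hC)
          hB (comap_measurable Y hA) hci, ofReal_measureReal]
    _ = ENNReal.ofReal (∫ ω in Y ⁻¹' A ∩ B, P.real {ω' | Y ω ≤ C ω'} ∂P) := by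
        rw [setIntegral_congr_ae ((hY hA).inter hB) (hcond.mono fun _ h _ => h.symm)]
    _ = ∫⁻ ω in Y ⁻¹' A ∩ B, P {ω' | Y ω ≤ C ω'} ∂P := by
        rw [ofReal_integral_eq_lintegral_ofReal (integrable_condExp.congr hcond.symm).integrableOn
          (ae_of_all _ fun _ => measureReal_nonneg)]
        exact lintegral_congr fun _ => ofReal_measureReal

end Independent

/-- Suppose `Y ⫫ C` and the non-censoring indicator `δ = 1{Y ≤ C}` is
conditionally independent of the covariate vector `X` given `σ(Y)`. Then for every `x ∈ ℝᵏ`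
and every `y` with `P(Q ≥ y) > 0` (where `Q = min(Y, C)`), the joint cumulative hazard is
identified from observables:
`∫_{(-∞,y]} (P(Q ≥ s))⁻¹ dν_{1,x}(s) = ∫_{(-∞,y]} (P(Y ≥ s))⁻¹ dμ_{Y,x}(s)`,
where `ν_{1,x}(A) = P(Q ∈ A, X ≤ x, Y ≤ C)` and `μ_{Y,x}(A) = P(Y ∈ A, X ≤ x)`
(componentwise `X ≤ x`). -/
theorem joint_cumulative_hazard_identified_from_censored_data
    {Ω : Type*} [MeasurableSpace Ω] [StandardBorelSpace Ω] [Nonempty Ω]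
    (P : Measure Ω) [IsProbabilityMeasure P] {k : ℕ}
    (Y C : Ω → ℝ) (X : Ω → Fin k → ℝ)
    (hY : Measurable Y) (hC : Measurable C) (hX : Measurable X)
    (hindep : IndepFun Y C P)
    (hci : CondIndepFun (MeasurableSpace.comap Y inferInstance)
        (measurable_iff_comap_le.mp hY)
        (fun ω => if Y ω ≤ C ω then (1 : ℝ) else 0) X P)
    (x : Fin k → ℝ) (y : ℝ) (hy : 0 < P {ω | y ≤ min (Y ω) (C ω)}) :
    ∫⁻ s in Iic y, (P {ω | s ≤ min (Y ω) (C ω)})⁻¹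
        ∂(Measure.map (fun ω => min (Y ω) (C ω))
            (P.restrict {ω | (∀ i, X ω i ≤ x i) ∧ Y ω ≤ C ω}))
      = ∫⁻ s in Iic y, (P {ω | s ≤ Y ω})⁻¹
          ∂(Measure.map Y (P.restrict {ω | ∀ i, X ω i ≤ x i})) := by
  have hD : MeasurableSet {ω | Y ω ≤ C ω} := measurableSet_le hY hC
  have hB : MeasurableSet {ω | ∀ i, X ω i ≤ x i} := hX measurableSet_Iic
  have hδ : Measurable fun ω => if Y ω ≤ C ω then (1 : ℝ) else 0 :=
    Measurable.ite hD measurable_const measurable_const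
  have hDB := (condIndepFun_iff_condExp_inter_preimage_eq_mul hδ hX).mp hci {1} (Iic x)
    (measurableSet_singleton 1) measurableSet_Iic
  rw [show (fun ω => if Y ω ≤ C ω then (1 : ℝ) else 0) ⁻¹' {1} = {ω | Y ω ≤ C ω} by
    ext; simp] at hDB
  have hmap_min : Measure.map (fun ω => min (Y ω) (C ω))
        (P.restrict {ω | (∀ i, X ω i ≤ x i) ∧ Y ω ≤ C ω})
      = Measure.map Y (P.restrict ({ω | ∀ i, X ω i ≤ x i} ∩ {ω | Y ω ≤ C ω})) :=
    Measure.map_congr <| (ae_restrict_iff' (hB.inter hD)).mpr <|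
      ae_of_all _ fun ω hω => min_eq_left hω.2
  rw [hmap_min, hindep.map_restrict_inter_setOf_le_eq_withDensity hY hC hB hDB,
    setLIntegral_withDensity_eq_setLIntegral_mul _ (measurable_measure_setOf_le P C)
      (measurable_measure_setOf_le P _).fun_inv measurableSet_Iic]
  refine setLIntegral_congr_fun measurableSet_Iic fun s (hs : s ≤ y) => ?_
  have hCs : P {ω | s ≤ C ω} ≠ 0 := (hy.trans_le (measure_mono fun ω hω =>
    hs.trans (hω.trans (min_le_right _ _)))).ne'
  rw [Pi.mul_apply, hindep.measure_le_min_eq_mul, ENNReal.mul_inv (.inr (measure_ne_top P _))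
    (.inl (measure_ne_top P _)), mul_left_comm, ENNReal.mul_inv_cancel hCs (measure_ne_top P _),
    mul_one]
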